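/- arXiv:1502.03183 — 2 statements merged into one kernel-verified Lean document; each statement's English description precedes it below -/
import Mathlib

section
/- In the setting of the Schwarzschild–de Sitter Hamiltonian p(r,ξ) = Δ_r ξ² - (r⁴/Δ_r) z² + m on (r_-, r_+) × ℝ with z² = 1 and m ≥ 0: the Hamilton vector field components (H_p r, H_p ξ) = (∂_ξ p, -∂_r p) both vanish at (r,ξ) if and only if r = r_p and ξ = 0, where r_p = ((n-1)M)^{1/(n-3)}. -/
/-!
Since `Δ_r = r⁴ μ̃` is positive on `(r_-, r_+)`, the component `∂_ξ p = 2 Δ_r ξ` vanishes only at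
`ξ = 0`. There `p = m - z² / μ̃`, so `∂_r p = z² μ̃' / μ̃²` vanishes exactly at the critical points
of `μ̃`, and `μ̃'(r) = 2 r^{-n} ((n-1) M - r^{n-3})` has the single positive zero `r_p`.
-/

/-- The rescaled Schwarzschild–de Sitter metric coefficient
`μ̃(r) = r^{-2} - 2 M r^{1-n} - λ`. -/
noncomputable def mutilde (n : ℕ) (M lam : ℝ) (r : ℝ) : ℝ :=
  r ^ (-2 : ℝ) - 2 * M * r ^ ((1 : ℝ) - (n : ℝ)) - lam

/-- `Δ_r = r² (1 - λ r²) - 2 M r^{5-n}`. -/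
noncomputable def DeltaR (n : ℕ) (M lam : ℝ) (r : ℝ) : ℝ :=
  r ^ 2 * (1 - lam * r ^ 2) - 2 * M * r ^ ((5 : ℝ) - (n : ℝ))

/-- The radius `r_p = ((n-1) M)^{1/(n-3)}` of the photon sphere. -/
noncomputable def rpCrit (n : ℕ) (M : ℝ) : ℝ :=
  (((n : ℝ) - 1) * M) ^ ((1 : ℝ) / ((n : ℝ) - 3))

open Real Filter Topology

section

variable {n : ℕ} {M lam r : ℝ}

lemma DeltaR_eq_pow_mul_mutilde (hr : 0 < r) :
    DeltaR n M lam r = r ^ 4 * mutilde n M lam r := by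
  have h₁ : r ^ ((5 : ℝ) - n) = r ^ 4 * r ^ ((1 : ℝ) - n) := by
    rw [← rpow_natCast, ← rpow_add hr]; norm_num; ring_nf
  have h₂ : r ^ 4 * r ^ (-2 : ℝ) = r ^ 2 := by
    rw [← rpow_natCast, ← rpow_add hr, ← rpow_natCast]; norm_num
  rw [DeltaR, mutilde, h₁]
  linear_combination -h₂

lemma hasDerivAt_mutilde (hr : 0 < r) :
    HasDerivAt (mutilde n M lam)
      (2 * r ^ (-(n : ℝ)) * (((n : ℝ) - 1) * M - r ^ ((n : ℝ) - 3))) r := by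
  refine (((hasDerivAt_rpow_const (p := -2) (Or.inl hr.ne')).sub
    ((hasDerivAt_rpow_const (p := 1 - n) (Or.inl hr.ne')).const_mul (2 * M))).sub_const
    lam).congr_deriv ?_
  have h₃ : r ^ (-(n : ℝ)) * r ^ ((n : ℝ) - 3) = r ^ (-2 - 1 : ℝ) := by
    rw [← rpow_add hr]; ring_nf
  rw [show (1 : ℝ) - n - 1 = -n by ring]
  linear_combination 2 * h₃

lemma rpow_sub_three_eq_iff_eq_rpCrit (hn : 3 < n) (hM : 0 ≤ M) (hr : 0 ≤ r) :
    r ^ ((n : ℝ) - 3) = ((n : ℝ) - 1) * M ↔ r = rpCrit n M := by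
  have hn' : (3 : ℝ) < n := by exact_mod_cast hn
  rw [rpCrit, one_div, eq_comm (a := r), rpow_inv_eq (by nlinarith) hr (by linarith), eq_comm]

lemma deriv_mutilde_eq_zero_iff (hn : 3 < n) (hM : 0 ≤ M) (hr : 0 < r) :
    deriv (mutilde n M lam) r = 0 ↔ r = rpCrit n M := by
  rw [(hasDerivAt_mutilde hr).deriv, ← rpow_sub_three_eq_iff_eq_rpCrit hn hM hr.le]
  rw [mul_eq_zero, or_iff_right (by positivity), sub_eq_zero, eq_comm]

lemma hasDerivAt_pow_four_div_DeltaR (hr : 0 < r) (hμ : mutilde n M lam r ≠ 0) :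
    HasDerivAt (fun s => s ^ 4 / DeltaR n M lam s)
      (-deriv (mutilde n M lam) r / mutilde n M lam r ^ 2) r := by
  refine (((hasDerivAt_mutilde hr).differentiableAt.hasDerivAt).inv hμ).congr_of_eventuallyEq ?_
  filter_upwards [Ioi_mem_nhds hr] with s hs
  rw [DeltaR_eq_pow_mul_mutilde hs, div_mul_cancel_left₀ (pow_ne_zero 4 hs.ne'),
    Pi.inv_apply]

end

theorem stmt8_general (n : ℕ) (hn : 4 ≤ n) (M lam : ℝ) (hM : 0 < M)
    (rm rp : ℝ) (hrm : 0 < rm)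
    (hpos : ∀ r : ℝ, rm < r → r < rp → 0 < mutilde n M lam r)
    (z m : ℝ) (hz : z ^ 2 = 1) :
    ∀ p : ℝ → ℝ → ℝ,
      (p = fun r ξ => DeltaR n M lam r * ξ ^ 2
          - (r ^ 4 / DeltaR n M lam r) * z ^ 2 + m) →
    ∀ r ξ : ℝ, rm < r → r < rp →
      ((deriv (p r) ξ = 0 ∧ deriv (fun r' => p r' ξ) r = 0) ↔
        (r = rpCrit n M ∧ ξ = 0)) := by
  rintro p rfl r ξ hr₁ hr₂
  have hr : 0 < r := hrm.trans hr₁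
  have hμ : 0 < mutilde n M lam r := hpos r hr₁ hr₂
  have hΔ : 0 < DeltaR n M lam r := by rw [DeltaR_eq_pow_mul_mutilde hr]; positivity
  have hξ : deriv (fun ξ => DeltaR n M lam r * ξ ^ 2 - r ^ 4 / DeltaR n M lam r * z ^ 2 + m) ξ
      = 2 * DeltaR n M lam r * ξ := by
    simp only [deriv_add_const, deriv_sub_const, deriv_const_mul_field', deriv_pow_field]
    ring
  rw [hξ, mul_eq_zero, or_iff_right (by positivity), and_comm]
  refine and_congr_left fun hξ₀ => ?_
  subst hξ₀
  simp only [zero_pow two_ne_zero, mul_zero, zero_sub, hz, mul_one]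
  have hd : HasDerivAt (fun r' => -(r' ^ 4 / DeltaR n M lam r') + m)
      (-(-deriv (mutilde n M lam) r / mutilde n M lam r ^ 2)) r :=
    (hasDerivAt_pow_four_div_DeltaR hr hμ.ne').neg.add_const m
  rw [hd.deriv, neg_div, neg_neg, div_eq_zero_iff, or_iff_left (by positivity), deriv_mutilde_eq_zero_iff (by omega) hM.le hr]

theorem stmt8 (n : ℕ) (hn : 4 ≤ n) (M lam : ℝ) (hM : 0 < M) (hlam : 0 < lam)
    (hnd : M ^ 2 * lam ^ ((n : ℝ) - 3)
      < ((n : ℝ) - 3) ^ ((n : ℝ) - 3) / ((n : ℝ) - 1) ^ ((n : ℝ) - 1))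
    (rm rp : ℝ) (hrm : 0 < rm) (hlt : rm < rp)
    (hrootm : mutilde n M lam rm = 0) (hrootp : mutilde n M lam rp = 0)
    (hpos : ∀ r : ℝ, rm < r → r < rp → 0 < mutilde n M lam r)
    (hrpm : rm < rpCrit n M) (hrpp : rpCrit n M < rp)
    (z m : ℝ) (hz : z ^ 2 = 1) (hm : 0 ≤ m) :
    ∀ p : ℝ → ℝ → ℝ,
      (p = fun r ξ => DeltaR n M lam r * ξ ^ 2
          - (r ^ 4 / DeltaR n M lam r) * z ^ 2 + m) →
    ∀ r ξ : ℝ, rm < r → r < rp →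
      ((deriv (p r) ξ = 0 ∧ deriv (fun r' => p r' ξ) r = 0) ↔
        (r = rpCrit n M ∧ ξ = 0)) :=
  stmt8_general n hn M lam hM rm rp hrm hpos z m hz
end

section
/- In the setting of the Schwarzschild–de Sitter Hamiltonian p(r,ξ) = Δ_r ξ² - (r⁴/Δ_r) z² + m on (r_-, r_+) × ℝ with z² = 1 and m ≥ 0, let F(r) = (r - r_p)², so that H_p F = 2(r - r_p) · (2 Δ_r ξ) and H_p² F = 2 (2Δ_r ξ)² + 2(r - r_p) H_p² r, where H_p² r = H_p(2Δ_r ξ). If H_p F = 0 at a point (r,ξ) ∈ (r_-, r_+) × ℝ, then either (r,ξ) = (r_p, 0) or H_p² F > 0 at that point. In particular, F is an escape function: the only trapping occurs at r = r_p, ξ = 0. -/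
/-- The Hamilton derivative `H_p f = (∂_ξ p)(∂_r f) - (∂_r p)(∂_ξ f)` of a function
`f` of `(r, ξ)` with respect to the Hamiltonian `p`. -/
noncomputable def hamDeriv (p f : ℝ → ℝ → ℝ) (r ξ : ℝ) : ℝ :=
  deriv (p r) ξ * deriv (fun r' => f r' ξ) r
    - deriv (fun r' => p r' ξ) r * deriv (f r) ξ

noncomputable def DP (n : ℕ) (M lam : ℝ) (r : ℝ) : ℝ :=
  2*r - 4*lam*r^3 - 2*M*(((5:ℝ)-(n:ℝ))*r^((5:ℝ)-(n:ℝ)-1))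

lemma hasDerivAt_DeltaR (n : ℕ) (M lam : ℝ) (r : ℝ) (hr : r ≠ 0) :
    HasDerivAt (DeltaR n M lam) (DP n M lam r) r := by
  have hp2 : HasDerivAt (fun x : ℝ => x ^ 2) (2*r) r := by
    simpa using hasDerivAt_pow 2 r
  have hq : HasDerivAt (fun x : ℝ => 1 - lam * x ^ 2) (-(lam*(2*r))) r := by
    simpa using (hp2.const_mul lam).const_sub 1
  have h1 := hp2.mul hq
  have h2 : HasDerivAt (fun x : ℝ => x ^ ((5:ℝ)-(n:ℝ)))
      (((5:ℝ)-(n:ℝ)) * r ^ ((5:ℝ)-(n:ℝ)-1)) r :=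
    Real.hasDerivAt_rpow_const (Or.inl hr)
  have h := h1.sub (h2.const_mul (2*M))
  unfold DeltaR DP
  refine h.congr_deriv ?_
  ring

lemma DeltaR_eq (n : ℕ) (M lam r : ℝ) (hr : 0 < r) :
    DeltaR n M lam r = r ^ 4 * mutilde n M lam r := by
  unfold DeltaR mutilde
  have e1 : r ^ (4:ℕ) * r ^ ((-2):ℝ) = r ^ (2:ℕ) := by
    rw [← Real.rpow_natCast r 4, ← Real.rpow_add hr, ← Real.rpow_natCast r 2]
    congr 1; push_cast; ring
  have e2 : r ^ (4:ℕ) * r ^ ((1:ℝ) - (n:ℝ)) = r ^ ((5:ℝ) - (n:ℝ)) := by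
    rw [← Real.rpow_natCast r 4, ← Real.rpow_add hr]
    congr 1; push_cast; ring
  linear_combination (-1:ℝ) * e1 + (2*M) * e2

lemma Keq (n : ℕ) (M lam r : ℝ) (hr : 0 < r) :
    4 * r ^ 3 * DeltaR n M lam r - r ^ 4 * DP n M lam r
      = 2 * r ^ ((8:ℝ) - (n:ℝ)) * (r ^ ((n:ℝ) - 3) - ((n:ℝ) - 1) * M) := by
  unfold DeltaR DP
  have A1 : r ^ (3:ℕ) * r ^ ((5:ℝ) - (n:ℝ)) = r ^ ((8:ℝ) - (n:ℝ)) := by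
    rw [← Real.rpow_natCast r 3, ← Real.rpow_add hr]; congr 1; push_cast; ring
  have A2 : r ^ (4:ℕ) * r ^ ((5:ℝ) - (n:ℝ) - 1) = r ^ ((8:ℝ) - (n:ℝ)) := by
    rw [← Real.rpow_natCast r 4, ← Real.rpow_add hr]; congr 1; push_cast; ring
  have A3 : r ^ ((8:ℝ) - (n:ℝ)) * r ^ ((n:ℝ) - 3) = r ^ (5:ℕ) := by
    rw [← Real.rpow_add hr, ← Real.rpow_natCast r 5]; congr 1; push_cast; ring
  linear_combination (-8*M) * A1 + (2*M*((5:ℝ)-(n:ℝ))) * A2 + (-2:ℝ) * A3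

lemma rpCrit_pos (n : ℕ) (hn : 4 ≤ n) (M : ℝ) (hM : 0 < M) : 0 < rpCrit n M := by
  have hn4 : (4:ℝ) ≤ (n:ℝ) := by exact_mod_cast hn
  have h1 : (0:ℝ) < ((n:ℝ) - 1) * M := by nlinarith
  exact Real.rpow_pos_of_pos h1 _

lemma rpCrit_rpow (n : ℕ) (hn : 4 ≤ n) (M : ℝ) (hM : 0 < M) :
    rpCrit n M ^ ((n:ℝ) - 3) = ((n:ℝ) - 1) * M := by
  have hn4 : (4:ℝ) ≤ (n:ℝ) := by exact_mod_cast hn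
  have h1 : (0:ℝ) < ((n:ℝ) - 1) * M := by nlinarith
  have hc : ((n:ℝ) - 3) ≠ 0 := by intro h; nlinarith
  rw [rpCrit, ← Real.rpow_mul h1.le, one_div_mul_cancel hc, Real.rpow_one]

lemma hamDeriv_eq {p f : ℝ → ℝ → ℝ} {r ξ a b c d : ℝ}
    (h1 : HasDerivAt (p r) a ξ) (h2 : HasDerivAt (fun r' => f r' ξ) b r)
    (h3 : HasDerivAt (fun r' => p r' ξ) c r) (h4 : HasDerivAt (f r) d ξ) :
    hamDeriv p f r ξ = a * b - c * d := by
  unfold hamDeriv; rw [h1.deriv, h2.deriv, h3.deriv, h4.deriv]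

lemma hamDeriv_eq' {p f : ℝ → ℝ → ℝ} {r ξ a b d : ℝ}
    (h1 : HasDerivAt (p r) a ξ) (h2 : HasDerivAt (fun r' => f r' ξ) b r)
    (h4 : HasDerivAt (f r) d ξ) :
    hamDeriv p f r ξ = a * b - deriv (fun r' => p r' ξ) r * d := by
  unfold hamDeriv; rw [h1.deriv, h2.deriv, h4.deriv]

theorem stmt9 (n : ℕ) (hn : 4 ≤ n) (M lam : ℝ) (hM : 0 < M) (hlam : 0 < lam)
    (hnd : M ^ 2 * lam ^ ((n : ℝ) - 3)
      < ((n : ℝ) - 3) ^ ((n : ℝ) - 3) / ((n : ℝ) - 1) ^ ((n : ℝ) - 1))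
    (rm rp : ℝ) (hrm : 0 < rm) (hlt : rm < rp)
    (hrootm : mutilde n M lam rm = 0) (hrootp : mutilde n M lam rp = 0)
    (hpos : ∀ r : ℝ, rm < r → r < rp → 0 < mutilde n M lam r)
    (hrpm : rm < rpCrit n M) (hrpp : rpCrit n M < rp)
    (z m : ℝ) (hz : z ^ 2 = 1) (hm : 0 ≤ m) :
    -- the Hamiltonian `p(r,ξ) = Δ_r ξ² - (r⁴/Δ_r) z² + m` and the escape
    -- function `F(r) = (r - r_p)²`
    ∀ p F : ℝ → ℝ → ℝ,
      (p = fun r ξ => DeltaR n M lam r * ξ ^ 2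
          - (r ^ 4 / DeltaR n M lam r) * z ^ 2 + m) →
      (F = fun r _ => (r - rpCrit n M) ^ 2) →
    ∀ r ξ : ℝ, rm < r → r < rp →
      -- `H_p F = 2 (r - r_p) ⬝ (2 Δ_r ξ)`
      (hamDeriv p F r ξ = 2 * (r - rpCrit n M) * (2 * DeltaR n M lam r * ξ)) ∧
      -- `H_p² F = 2 (2 Δ_r ξ)² + 2 (r - r_p) H_p² r`
      (hamDeriv p (hamDeriv p F) r ξ
        = 2 * (2 * DeltaR n M lam r * ξ) ^ 2
          + 2 * (r - rpCrit n M)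
              * hamDeriv p (hamDeriv p (fun r' _ => r')) r ξ) ∧
      -- the escape function property
      (hamDeriv p F r ξ = 0 →
        (r = rpCrit n M ∧ ξ = 0) ∨ 0 < hamDeriv p (hamDeriv p F) r ξ) := by
  intro p F hp hF r ξ hr1 hr2
  subst hp; subst hF
  have hr0 : 0 < r := lt_trans hrm hr1
  have hD : 0 < DeltaR n M lam r := by
    rw [DeltaR_eq n M lam r hr0]
    exact mul_pos (pow_pos hr0 4) (hpos r hr1 hr2)
  have hDr : HasDerivAt (DeltaR n M lam) (DP n M lam r) r :=
    hasDerivAt_DeltaR n M lam r hr0.ne'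
  -- ∂_ξ p at any point
  have hξp : ∀ a b : ℝ, HasDerivAt
      (fun x : ℝ => DeltaR n M lam a * x ^ 2 - (a ^ 4 / DeltaR n M lam a) * z ^ 2 + m)
      (DeltaR n M lam a * (2 * b)) b := by
    intro a b
    have h := (((hasDerivAt_pow 2 b).const_mul (DeltaR n M lam a)).sub_const
      ((a ^ 4 / DeltaR n M lam a) * z ^ 2)).add_const m
    refine h.congr_deriv ?_ <;> (try push_cast) <;> (try simp only [id_eq]) <;> ring
  -- ∂_r p at r (needs D r ≠ 0), for any ξ-value b
  have hrp : ∀ b : ℝ, HasDerivAt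
      (fun x : ℝ => DeltaR n M lam x * b ^ 2 - (x ^ 4 / DeltaR n M lam x) * z ^ 2 + m)
      (DP n M lam r * b ^ 2
        - ((4 * r ^ 3 * DeltaR n M lam r - r ^ 4 * DP n M lam r)
            / (DeltaR n M lam r) ^ 2) * z ^ 2) r := by
    intro b
    have h := ((hDr.mul_const (b ^ 2)).sub
      (((hasDerivAt_pow 4 r).div hDr hD.ne').mul_const (z ^ 2))).add_const m
    refine h.congr_deriv ?_ <;> (try push_cast) <;> (try simp only [id_eq]) <;> ring
  set P : ℝ → ℝ → ℝ := fun r ξ => DeltaR n M lam r * ξ ^ 2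
      - (r ^ 4 / DeltaR n M lam r) * z ^ 2 + m with hPdef
  -- H_p F globally
  have key1 : ∀ a b : ℝ, hamDeriv P (fun r _ => (r - rpCrit n M) ^ 2) a b
      = 2 * (a - rpCrit n M) * (2 * DeltaR n M lam a * b) := by
    intro a b
    have h2 : HasDerivAt (fun r' : ℝ => (r' - rpCrit n M) ^ 2) (2 * (a - rpCrit n M)) a := by
      have h := ((hasDerivAt_id a).sub_const (rpCrit n M)).pow 2
      refine h.congr_deriv ?_ <;> (try push_cast) <;> (try simp only [id_eq]) <;> ring
    have h := hamDeriv_eq' (p := P) (f := fun r _ => (r - rpCrit n M) ^ 2)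
      (hξp a b) h2 (hasDerivAt_const b ((a - rpCrit n M) ^ 2))
    rw [h]; ring
  -- H_p r globally
  have key2 : ∀ a b : ℝ, hamDeriv P (fun r' _ => r') a b = 2 * DeltaR n M lam a * b := by
    intro a b
    have h := hamDeriv_eq' (p := P) (f := fun r' _ => r')
      (hξp a b) (hasDerivAt_id a) (hasDerivAt_const b a)
    rw [h]; ring
  have eG : hamDeriv P (fun r _ => (r - rpCrit n M) ^ 2)
      = fun a b => 2 * (a - rpCrit n M) * (2 * DeltaR n M lam a * b) :=
    funext fun a => funext fun b => key1 a b
  have eG2 : hamDeriv P (fun r' _ => r')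
      = fun a b => 2 * DeltaR n M lam a * b :=
    funext fun a => funext fun b => key2 a b
  -- second derivatives at (r, ξ)
  have V2 : hamDeriv P (fun a b => 2 * (a - rpCrit n M) * (2 * DeltaR n M lam a * b)) r ξ
      = (DeltaR n M lam r * (2 * ξ))
          * (2 * (2 * DeltaR n M lam r * ξ)
              + 2 * (r - rpCrit n M) * (2 * DP n M lam r * ξ))
        - (DP n M lam r * ξ ^ 2
            - ((4 * r ^ 3 * DeltaR n M lam r - r ^ 4 * DP n M lam r)
                / (DeltaR n M lam r) ^ 2) * z ^ 2)
          * (2 * (r - rpCrit n M) * (2 * DeltaR n M lam r)) := by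
    have h2 : HasDerivAt (fun x : ℝ => 2 * (x - rpCrit n M) * (2 * DeltaR n M lam x * ξ))
        (2 * (2 * DeltaR n M lam r * ξ)
          + 2 * (r - rpCrit n M) * (2 * DP n M lam r * ξ)) r := by
      have h := (((hasDerivAt_id r).sub_const (rpCrit n M)).const_mul 2).mul
        ((hDr.const_mul 2).mul_const ξ)
      refine h.congr_deriv ?_ <;> (try simp only [id_eq]) <;> ring
    have h4 : HasDerivAt (fun b : ℝ => 2 * (r - rpCrit n M) * (2 * DeltaR n M lam r * b))
        (2 * (r - rpCrit n M) * (2 * DeltaR n M lam r)) ξ := by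
      have h := ((hasDerivAt_id ξ).const_mul (2 * DeltaR n M lam r)).const_mul
        (2 * (r - rpCrit n M))
      refine h.congr_deriv ?_ <;> (try simp only [id_eq]) <;> ring
    exact hamDeriv_eq (p := P)
      (f := fun a b => 2 * (a - rpCrit n M) * (2 * DeltaR n M lam a * b))
      (hξp r ξ) h2 (hrp ξ) h4
  have V3 : hamDeriv P (fun a b => 2 * DeltaR n M lam a * b) r ξ
      = (DeltaR n M lam r * (2 * ξ)) * (2 * DP n M lam r * ξ)
        - (DP n M lam r * ξ ^ 2
            - ((4 * r ^ 3 * DeltaR n M lam r - r ^ 4 * DP n M lam r)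
                / (DeltaR n M lam r) ^ 2) * z ^ 2)
          * (2 * DeltaR n M lam r) := by
    have h2 : HasDerivAt (fun x : ℝ => 2 * DeltaR n M lam x * ξ) (2 * DP n M lam r * ξ) r := by
      have h := (hDr.const_mul 2).mul_const ξ
      refine h.congr_deriv ?_ <;> (try simp only [id_eq]) <;> ring
    have h4 : HasDerivAt (fun b : ℝ => 2 * DeltaR n M lam r * b) (2 * DeltaR n M lam r) ξ := by
      have h := (hasDerivAt_id ξ).const_mul (2 * DeltaR n M lam r)
      refine h.congr_deriv ?_ <;> (try simp only [id_eq]) <;> ring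
    exact hamDeriv_eq (p := P) (f := fun a b => 2 * DeltaR n M lam a * b)
      (hξp r ξ) h2 (hrp ξ) h4
  have P1 := key1 r ξ
  refine ⟨P1, ?_, ?_⟩
  · rw [eG, eG2, V2, V3]; ring
  · intro h0
    have h0' : 2 * (r - rpCrit n M) * (2 * DeltaR n M lam r * ξ) = 0 := by
      rw [← P1]; exact h0
    rcases mul_eq_zero.mp h0' with h | h
    · -- r = rpCrit
      have e0 : r - rpCrit n M = 0 := by linarith
      by_cases hξ0 : ξ = 0
      · exact Or.inl ⟨by linarith, hξ0⟩
      · right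
        rw [eG, V2, e0]
        nlinarith [pow_two_pos_of_ne_zero (mul_ne_zero hD.ne' hξ0)]
    · -- ξ = 0
      have hξ0 : ξ = 0 := by
        rcases mul_eq_zero.mp h with h' | h'
        · exact absurd h' (mul_ne_zero two_ne_zero hD.ne')
        · exact h'
      by_cases hrc : r = rpCrit n M
      · exact Or.inl ⟨hrc, hξ0⟩
      · right
        have hn4 : (4:ℝ) ≤ (n:ℝ) := by exact_mod_cast hn
        have hc0 : (0:ℝ) < (n:ℝ) - 3 := by linarith
        have hrpow := rpCrit_rpow n hn M hM
        have hsign : 0 < (r - rpCrit n M) * (r ^ ((n:ℝ) - 3) - ((n:ℝ) - 1) * M) := by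
          rcases lt_or_gt_of_ne hrc with hlt' | hgt'
          · have h1 : r ^ ((n:ℝ) - 3) < rpCrit n M ^ ((n:ℝ) - 3) :=
              Real.rpow_lt_rpow hr0.le hlt' hc0
            rw [hrpow] at h1
            exact mul_pos_of_neg_of_neg (sub_neg.mpr hlt') (sub_neg.mpr h1)
          · have h1 : rpCrit n M ^ ((n:ℝ) - 3) < r ^ ((n:ℝ) - 3) :=
              Real.rpow_lt_rpow (rpCrit_pos n hn M hM).le hgt' hc0
            rw [hrpow] at h1
            exact mul_pos (sub_pos.mpr hgt') (sub_pos.mpr h1)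
        have ht : 0 < r ^ ((8:ℝ) - (n:ℝ)) := Real.rpow_pos_of_pos hr0 _
        have hK := Keq n M lam r hr0
        have hgoal : 0 < 8 * ((r - rpCrit n M) * (r ^ ((n:ℝ) - 3) - ((n:ℝ) - 1) * M))
            * r ^ ((8:ℝ) - (n:ℝ)) / DeltaR n M lam r :=
          div_pos (mul_pos (mul_pos (by norm_num) hsign) ht) hD
        rw [eG, V2, hξ0, hK, hz]
        convert hgoal using 1
        have hDne := hD.ne'
        field_simp
        ring
end
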